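/- Let L be a positive integer. Let X be an exponential random variable with mean λ > 0 and V an independent gamma random variable with shape L and scale s > 0. Then for all θ > 0, P̄ > 0 and c > 0, P( min(θ·V, P̄)·X ≥ c ) = ( P̄^L/(Γ(L)·(θ·s)^L) ) · K_L( c/(P̄·λ), P̄/(θ·s) ) + exp(−c/(P̄·λ)) · Γ(L, P̄/(θ·s)) / Γ(L), where K_ν(x,y) = ∫₁^∞ t^(−ν−1)·exp(−x·t − y/t) dt is the incomplete Bessel function. -/

import Mathlib

open MeasureTheory ProbabilityTheory

/-- Upper incomplete gamma function `Γ(a, b) = ∫_b^∞ t^(a-1) e^(-t) dt`. -/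
noncomputable def upperIncGamma (a b : ℝ) : ℝ :=
  ∫ t in Set.Ioi b, t ^ (a - 1) * Real.exp (-t)

/-- Incomplete Bessel function `K_ν(x, y) = ∫₁^∞ t^(-ν-1) exp(-x t - y/t) dt`. -/
noncomputable def incompleteBessel (ν x y : ℝ) : ℝ :=
  ∫ t in Set.Ioi (1 : ℝ), t ^ (-ν - 1) * Real.exp (-(x * t) - y / t)

/-! Given `V = v > 0`, the exponential tail gives
`P(min(θv, P̄)·X ≥ c) = exp(-c/(λ·min(θv, P̄)))`, so the probability is the integral of this
against the gamma density. Split at `v = P̄/θ`: above it the power is capped, the exponential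
factor is constant and what remains is a gamma tail, `Γ(L, P̄/(θs))/Γ(L)`; below it the
substitution `v = (P̄/θ)/t` turns `∫ v^(L-1) exp(-v/s - c/(λθv)) dv` into the incomplete
Bessel integral. -/

open Set Real

lemma measure_preimage_prodMk_eq_lintegral {Ω α β : Type*} [MeasurableSpace Ω]
    [MeasurableSpace α] [MeasurableSpace β] {μ : Measure Ω} [IsFiniteMeasure μ]
    {V : Ω → α} {X : Ω → β} (hV : Measurable V) (hX : Measurable X) (hind : IndepFun V X μ)
    {S : Set (α × β)} (hS : MeasurableSet S) :
    μ ((fun ω ↦ (V ω, X ω)) ⁻¹' S) = ∫⁻ v, μ.map X (Prod.mk v ⁻¹' S) ∂μ.map V := by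
  rw [← Measure.map_apply (hV.prodMk hX) hS,
    (indepFun_iff_map_prod_eq_prod_map_map hV.aemeasurable hX.aemeasurable).mp hind,
    Measure.prod_apply hS]

lemma expMeasure_Ici {r a : ℝ} (hr : 0 < r) (ha : 0 ≤ a) :
    expMeasure r (Ici a) = ENNReal.ofReal (exp (-(r * a))) := by
  have hint : IntegrableOn (fun x ↦ r * exp (-(r * x))) (Ici a) := by
    rw [integrableOn_Ici_iff_integrableOn_Ioi]
    simp_rw [neg_mul_eq_neg_mul]
    exact (exp_neg_integrableOn_Ioi a hr).const_mul r
  have hpdf : ∀ x ∈ Ici a, gammaPDF 1 r x = ENNReal.ofReal (r * exp (-(r * x))) :=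
    fun x hx ↦ exponentialPDF_of_nonneg (ha.trans hx)
  rw [expMeasure, gammaMeasure, withDensity_apply _ measurableSet_Ici,
    setLIntegral_congr_fun measurableSet_Ici hpdf,
    ← ofReal_integral_eq_lintegral_ofReal hint (ae_of_all _ fun x ↦ by positivity),
    integral_Ici_eq_integral_Ioi, integral_const_mul]
  have hIoi := integral_comp_mul_left_Ioi (fun y ↦ exp (-y)) a hr
  simp only [integral_exp_neg_Ioi, smul_eq_mul] at hIoi
  rw [hIoi]
  field_simp

lemma expMeasure_setOf_le_mul_of_pos {r c m : ℝ} (hr : 0 < r) (hc : 0 ≤ c) (hm : 0 < m) :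
    expMeasure r {x | c ≤ m * x} = ENNReal.ofReal (exp (-(r * c / m))) := by
  have hset : {x | c ≤ m * x} = Ici (c / m) := by
    ext x
    rw [mem_ofPred_eq, mem_Ici, div_le_iff₀' hm]
  rw [hset, expMeasure_Ici hr (div_nonneg hc hm.le), mul_div_assoc]

lemma expMeasure_setOf_le_mul_of_nonpos {r c m : ℝ} (hc : 0 < c) (hm : m ≤ 0) :
    expMeasure r {x | c ≤ m * x} = 0 := by
  have hneg : expMeasure r (Iio 0) = 0 := by
    rw [expMeasure, gammaMeasure, withDensity_apply _ measurableSet_Iio]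
    exact lintegral_gammaPDF_of_nonpos le_rfl
  refine measure_mono_null (fun x (hx : c ≤ m * x) ↦ ?_) hneg
  by_contra hx0
  nlinarith [mem_Iio.not.mp hx0]

lemma integrable_gammaPDFReal {a r : ℝ} (ha : 0 < a) (hr : 0 < r) :
    Integrable (gammaPDFReal a r) := by
  refine ⟨(measurable_gammaPDFReal a r).aestronglyMeasurable, ?_⟩
  rw [hasFiniteIntegral_iff_ofReal (ae_of_all _ (gammaPDFReal_nonneg ha hr))]
  exact (lintegral_gammaPDF_eq_one ha hr).trans_lt ENNReal.one_lt_top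

lemma lintegral_ofReal_gammaMeasure {a r C : ℝ} (ha : 0 < a) (hr : 0 < r) {g : ℝ → ℝ}
    (hg : Measurable g) (hg0 : ∀ v, 0 ≤ g v) (hgC : ∀ v, g v ≤ C) :
    ∫⁻ v, ENNReal.ofReal (g v) ∂gammaMeasure a r =
      ENNReal.ofReal (∫ v, gammaPDFReal a r v * g v) := by
  have hint : Integrable (fun v ↦ gammaPDFReal a r v * g v) :=
    (integrable_gammaPDFReal ha hr).mul_bdd hg.aestronglyMeasurable
      (ae_of_all _ fun v ↦ by rw [norm_of_nonneg (hg0 v)]; exact hgC v)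
  rw [gammaMeasure, lintegral_withDensity_eq_lintegral_mul _ (f := gammaPDF a r)
      (measurable_gammaPDFReal a r).ennreal_ofReal hg.ennreal_ofReal,
    ofReal_integral_eq_lintegral_ofReal hint
      (ae_of_all _ fun v ↦ mul_nonneg (gammaPDFReal_nonneg ha hr v) (hg0 v))]
  simp only [Pi.mul_apply, gammaPDF, ENNReal.ofReal_mul (gammaPDFReal_nonneg ha hr _)]

lemma lintegral_gammaMeasure_expMeasure_setOf_le_min_mul {a ρ r θ P c : ℝ} (ha : 0 < a)
    (hρ : 0 < ρ) (hr : 0 < r) (hθ : 0 < θ) (hP : 0 < P) (hc : 0 < c) :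
    ∫⁻ v, expMeasure r {x | c ≤ min (θ * v) P * x} ∂gammaMeasure a ρ =
      ENNReal.ofReal (∫ v in Ioi 0, gammaPDFReal a ρ v * exp (-(r * c / min (θ * v) P))) := by
  set ψ : ℝ → ℝ := (Ioi 0).indicator fun v ↦ exp (-(r * c / min (θ * v) P)) with hψ
  have hslice : ∀ v, expMeasure r {x | c ≤ min (θ * v) P * x} = ENNReal.ofReal (ψ v) := by
    intro v
    rcases le_or_gt v 0 with hv | hv
    · rw [hψ, indicator_of_notMem (show v ∉ Ioi 0 from not_lt.mpr hv), ENNReal.ofReal_zero]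
      exact expMeasure_setOf_le_mul_of_nonpos hc
        ((min_le_left _ _).trans (mul_nonpos_of_nonneg_of_nonpos hθ.le hv))
    · rw [hψ, indicator_of_mem (show v ∈ Ioi 0 from hv)]
      exact expMeasure_setOf_le_mul_of_pos hr hc.le (lt_min (mul_pos hθ hv) hP)
  have hψ_meas : Measurable ψ :=
    (measurable_const.div ((measurable_id.const_mul θ).min measurable_const)).neg.exp.indicator
      measurableSet_Ioi
  have hψ_le : ∀ v, ψ v ≤ 1 := indicator_le' (fun v (hv : 0 < v) ↦ exp_le_one_iff.mpr
    (neg_nonpos.mpr (div_nonneg (mul_pos hr hc).le (lt_min (mul_pos hθ hv) hP).le)))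
    (fun _ _ ↦ zero_le_one)
  simp_rw [hslice]
  rw [lintegral_ofReal_gammaMeasure ha hρ hψ_meas
    (indicator_nonneg fun _ _ ↦ (exp_pos _).le) hψ_le, hψ]
  simp only [← indicator_mul_right, integral_indicator measurableSet_Ioi]

lemma integral_Ioi_gammaPDFReal {a r b : ℝ} (hr : 0 < r) (hb : 0 ≤ b) :
    ∫ v in Ioi b, gammaPDFReal a r v = upperIncGamma a (r * b) / Gamma a := by
  have hpdf : ∀ v ∈ Ioi b, gammaPDFReal a r v =
      r / Gamma a * ((r * v) ^ (a - 1) * exp (-(r * v))) := by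
    intro v hv
    have hv0 : 0 ≤ v := hb.trans (le_of_lt hv)
    rw [gammaPDFReal, if_pos hv0, mul_rpow hr.le hv0, rpow_sub_one hr.ne']
    field_simp
  rw [setIntegral_congr_fun measurableSet_Ioi hpdf, integral_const_mul,
    integral_comp_mul_left_Ioi (fun u ↦ u ^ (a - 1) * exp (-u)) b hr, upperIncGamma, smul_eq_mul]
  field_simp

lemma integral_Ioo_zero_eq_integral_Ioi_one_comp_div {E : Type*} [NormedAddCommGroup E]
    [NormedSpace ℝ E] {b : ℝ} (hb : 0 < b) (G : ℝ → E) :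
    ∫ w in Ioo 0 b, G w = ∫ t in Ioi 1, (b / t ^ 2) • G (b / t) := by
  have himage : (fun t ↦ b / t) '' Ioi 1 = Ioo 0 b := by
    ext w
    constructor
    · rintro ⟨t, ht, rfl⟩
      exact ⟨div_pos hb (one_pos.trans ht), div_lt_self hb ht⟩
    · rintro ⟨hw0, hwb⟩
      exact ⟨b / w, (one_lt_div hw0).mpr hwb, div_div_cancel₀ hb.ne'⟩
  have hderiv : ∀ t ∈ Ioi (1 : ℝ), HasDerivWithinAt (fun t ↦ b / t) (-(b / t ^ 2)) (Ioi 1) t := by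
    intro t ht
    simpa [div_eq_mul_inv] using
      ((hasDerivAt_inv (one_pos.trans ht).ne').const_mul b).hasDerivWithinAt (s := Ioi 1)
  have hinj : InjOn (fun t ↦ b / t) (Ioi 1) := fun t _ u _ h ↦ by
    simpa [div_div_cancel₀ hb.ne'] using congrArg (b / ·) h
  rw [← himage, integral_image_eq_integral_abs_deriv_smul measurableSet_Ioi hderiv hinj]
  refine setIntegral_congr_fun measurableSet_Ioi fun t ht ↦ ?_
  rw [abs_neg, abs_of_pos (div_pos hb (pow_pos (one_pos.trans ht) 2))]

lemma integral_Ioo_rpow_mul_exp_eq_incompleteBessel {a r k b : ℝ} (hb : 0 < b) :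
    ∫ v in Ioo 0 b, v ^ (a - 1) * exp (-(r * v) - k / v) =
      b ^ a * incompleteBessel a (k / b) (r * b) := by
  rw [integral_Ioo_zero_eq_integral_Ioi_one_comp_div hb, incompleteBessel, ← integral_const_mul]
  refine setIntegral_congr_fun measurableSet_Ioi fun t (ht : 1 < t) ↦ ?_
  have ht0 : 0 < t := one_pos.trans ht
  have hpow : b / t ^ 2 * (b / t) ^ (a - 1) = b ^ a * t ^ (-a - 1) := by
    rw [div_rpow hb.le ht0.le, rpow_sub_one hb.ne', rpow_sub_one ht0.ne', sub_eq_add_neg,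
      rpow_add ht0, rpow_neg ht0.le, rpow_neg_one]
    field_simp
  have hexp : -(r * (b / t)) - k / (b / t) = -(k / b * t) - r * b / t := by
    field_simp
    ring
  rw [smul_eq_mul, ← mul_assoc, hpow, hexp, mul_assoc]

lemma integral_Ioi_gammaPDFReal_mul_exp_neg_div_min {a r θ P k : ℝ} (ha : 0 < a) (hr : 0 < r)
    (hθ : 0 < θ) (hP : 0 < P) (hk : 0 ≤ k) :
    ∫ v in Ioi 0, gammaPDFReal a r v * exp (-(k / min (θ * v) P)) =
      (r * (P / θ)) ^ a / Gamma a * incompleteBessel a (k / P) (r * (P / θ)) +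
        exp (-(k / P)) * upperIncGamma a (r * (P / θ)) / Gamma a := by
  set b := P / θ
  have hb : 0 < b := div_pos hP hθ
  have hint : IntegrableOn (fun v ↦ gammaPDFReal a r v * exp (-(k / min (θ * v) P))) (Ioi 0) := by
    refine (integrable_gammaPDFReal ha hr).integrableOn.mul_bdd (c := 1)
      ((measurable_const.div ((measurable_id.const_mul θ).min measurable_const)).neg.exp
        |>.aestronglyMeasurable)
      ((ae_restrict_iff' measurableSet_Ioi).mpr (ae_of_all _ fun v (hv : 0 < v) ↦ ?_))
    rw [norm_of_nonneg (exp_nonneg _), exp_le_one_iff, neg_nonpos]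
    exact div_nonneg hk (lt_min (mul_pos hθ hv) hP).le
  have hsplit := setIntegral_union (Ioc_disjoint_Ioi le_rfl) measurableSet_Ioi
    (hint.mono_set Ioc_subset_Ioi_self) (hint.mono_set (Ioi_subset_Ioi hb.le))
  rw [Ioc_union_Ioi_eq_Ioi hb.le] at hsplit
  rw [hsplit, integral_Ioc_eq_integral_Ioo]
  congr 1
  · have huncapped : ∀ v ∈ Ioo 0 b, gammaPDFReal a r v * exp (-(k / min (θ * v) P)) =
        r ^ a / Gamma a * (v ^ (a - 1) * exp (-(r * v) - k / θ / v)) := by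
      rintro v ⟨hv0, hvb⟩
      rw [min_eq_left ((lt_div_iff₀' hθ).mp hvb).le, gammaPDFReal, if_pos hv0.le, div_div,
        sub_eq_add_neg (-(r * v)), exp_add]
      ring
    rw [setIntegral_congr_fun measurableSet_Ioo huncapped, integral_const_mul,
      integral_Ioo_rpow_mul_exp_eq_incompleteBessel hb, mul_rpow hr.le hb.le,
      show k / θ / b = k / P by rw [div_div, mul_div_cancel₀ _ hθ.ne']]
    ring
  · have hcapped : ∀ v ∈ Ioi b, gammaPDFReal a r v * exp (-(k / min (θ * v) P)) =
        gammaPDFReal a r v * exp (-(k / P)) := fun v (hv : b < v) ↦ by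
      rw [min_eq_right ((div_lt_iff₀' hθ).mp hv).le]
    rw [setIntegral_congr_fun measurableSet_Ioi hcapped, integral_mul_const,
      integral_Ioi_gammaPDFReal hr hb.le]
    ring

theorem capped_power_exceedance_prob
    {Ω : Type*} [MeasureSpace Ω] [IsProbabilityMeasure (ℙ : Measure Ω)]
    (L : ℕ) (hL : 0 < L)
    (X V : Ω → ℝ) (hXm : Measurable X) (hVm : Measurable V)
    (lam s : ℝ) (hlam : 0 < lam) (hs : 0 < s)
    (hX : Measure.map X ℙ = expMeasure lam⁻¹)
    (hV : Measure.map V ℙ = gammaMeasure L s⁻¹)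
    (hind : IndepFun X V ℙ)
    (θ Pbar c : ℝ) (hθ : 0 < θ) (hPbar : 0 < Pbar) (hc : 0 < c) :
    ℙ {ω | min (θ * V ω) Pbar * X ω ≥ c} =
      ENNReal.ofReal
        (Pbar ^ L / (Real.Gamma L * (θ * s) ^ L) *
          incompleteBessel L (c / (Pbar * lam)) (Pbar / (θ * s)) +
        Real.exp (-(c / (Pbar * lam))) * upperIncGamma L (Pbar / (θ * s)) /
          Real.Gamma L) := by
  have hLpos : (0 : ℝ) < L := Nat.cast_pos.mpr hL
  have hS : MeasurableSet {p : ℝ × ℝ | c ≤ min (θ * p.1) Pbar * p.2} :=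
    measurableSet_le measurable_const (by fun_prop)
  calc ℙ {ω | min (θ * V ω) Pbar * X ω ≥ c}
      = ∫⁻ v, expMeasure lam⁻¹ {x | c ≤ min (θ * v) Pbar * x} ∂gammaMeasure L s⁻¹ := by
        rw [← hX, ← hV]
        exact measure_preimage_prodMk_eq_lintegral hVm hXm hind.symm hS
    _ = ENNReal.ofReal (∫ v in Ioi 0, gammaPDFReal L s⁻¹ v *
          exp (-(lam⁻¹ * c / min (θ * v) Pbar))) :=
        lintegral_gammaMeasure_expMeasure_setOf_le_min_mul hLpos (inv_pos.mpr hs)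
          (inv_pos.mpr hlam) hθ hPbar hc
    _ = _ := by
      rw [integral_Ioi_gammaPDFReal_mul_exp_neg_div_min hLpos (inv_pos.mpr hs) hθ hPbar
          (mul_pos (inv_pos.mpr hlam) hc).le,
        show s⁻¹ * (Pbar / θ) = Pbar / (θ * s) by field_simp,
        show lam⁻¹ * c / Pbar = c / (Pbar * lam) by field_simp, rpow_natCast, div_pow]
      congr 1
      ring
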